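/- For every d ≥ 1, every real δ ∈ (0,1], and every sufficiently large n, every subset H of V(T_n) with w(H) ≥ δn contains a replica of T_d; in fact it suffices that 2^(δn) > Σ_{i=0}^{d−1} C(n,i), which holds for all n ≥ n₀(d,δ). -/

import Mathlib

/-- Vertex set of the full binary tree `T_n` of depth `n-1`:
binary strings of length `< n`; the level of a vertex is its length. -/
def treeVerts (n : ℕ) : Set (List Bool) := {x | x.length < n}

/-- Weight of a set of vertices: `w(H) = Σ_{x ∈ H} 2^(-level x)`. -/
noncomputable def weight (H : Set (List Bool)) : ℝ :=
  ∑' x : H, (2 : ℝ) ^ (-((x : List Bool).length : ℤ))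

/-- `f` is a regular embedding of `T_d`: vertices at equal levels map to equal
levels, and the two children of each vertex map to descendants of distinct
children of the image (descendant = extension of the string). -/
def IsRegEmb (d : ℕ) (f : List Bool → List Bool) : Prop :=
  (∀ x y : List Bool, x.length < d → y.length < d → x.length = y.length →
      (f x).length = (f y).length) ∧
  (∀ x : List Bool, x.length + 1 < d → ∃ c : Bool,
      (f x ++ [c]) <+: f (x ++ [false]) ∧ (f x ++ [!c]) <+: f (x ++ [true]))

/-- `S(H)`: the set of signatures (sets of occupied levels) of all regular
embeddings of some `T_d`, `d ≥ 0`, into `H`. -/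
def sigs (H : Set (List Bool)) : Set (Set ℕ) :=
  {σ | ∃ (d : ℕ) (f : List Bool → List Bool), IsRegEmb d f ∧
      (∀ x : List Bool, x.length < d → f x ∈ H) ∧
      σ = {l : ℕ | ∃ x : List Bool, x.length < d ∧ (f x).length = l}}

/-!
The levels occupied by a replica form its signature; let `S(H)` be the set of signatures of
replicas (of any depth) in `H`. Splitting `H` at the root into branches `H₀, H₁`, every signature
of a branch, shifted down one level, is a signature of `H`; if the root lies in `H`, then a
signature common to both branches, shifted and extended by level `0`, is a further one (glue the
two replicas under the root). Hence `|S(H)| ≥ |S(H₀)| + |S(H₁)|` when the root is in `H` and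
`|S(H)| ≥ max |S(H₀)| |S(H₁)|` otherwise, and since `w(H) = [root ∈ H] + (w(H₀) + w(H₁)) / 2`,
induction and AM–GM give `|S(H)| ≥ 2 ^ w(H)`. If `H` contains no replica of `T_d`, each signature
is a set of fewer than `d` of the `n` levels, so `2 ^ (δn) ≤ 2 ^ w(H) ≤ |S(H)| ≤ Σ_{i<d} C(n,i)`.
-/

-- The level to which a regular embedding `f` sends level `j`, read off the leftmost vertex.
def level (f : List Bool → List Bool) (j : ℕ) : ℕ := (f (List.replicate j false)).length

def signature (d : ℕ) (f : List Bool → List Bool) : Set ℕ :=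
  {l | ∃ x : List Bool, x.length < d ∧ (f x).length = l}

theorem mem_sigs {H : Set (List Bool)} {σ : Set ℕ} :
    σ ∈ sigs H ↔ ∃ d f, IsRegEmb d f ∧ (∀ x : List Bool, x.length < d → f x ∈ H) ∧
      σ = signature d f :=
  Iff.rfl

namespace IsRegEmb

variable {d : ℕ} {f : List Bool → List Bool}

theorem mono (h : IsRegEmb d f) {d' : ℕ} (hd : d' ≤ d) : IsRegEmb d' f :=
  ⟨fun x y hx hy => h.1 x y (hx.trans_le hd) (hy.trans_le hd),
    fun x hx => h.2 x (hx.trans_le hd)⟩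

theorem length_eq_level (h : IsRegEmb d f) {x : List Bool} (hx : x.length < d) :
    (f x).length = level f x.length :=
  h.1 x _ hx (by simpa using hx) (by simp)

theorem strictMonoOn_level (h : IsRegEmb d f) : StrictMonoOn (level f) (Set.Iio d) := by
  refine strictMonoOn_of_lt_add_one Set.ordConnected_Iio fun j _ _ hj => ?_
  obtain ⟨c, hc, -⟩ := h.2 (List.replicate j false) (by simpa using hj)
  have := hc.length_le
  simp only [List.length_append, List.length_singleton] at this
  simp only [level, List.replicate_succ']
  omega

theorem signature_eq_range (h : IsRegEmb d f) :
    signature d f = Set.range fun j : Fin d => level f j := by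
  ext l
  constructor
  · rintro ⟨x, hx, rfl⟩
    exact ⟨⟨x.length, hx⟩, (h.length_eq_level hx).symm⟩
  · rintro ⟨j, rfl⟩
    exact ⟨List.replicate j false, by simp, rfl⟩

theorem strictMono_level (h : IsRegEmb d f) : StrictMono fun j : Fin d => level f j :=
  fun i j hij => h.strictMonoOn_level i.2 j.2 hij

theorem ncard_signature (h : IsRegEmb d f) : (signature d f).ncard = d := by
  rw [h.signature_eq_range, Set.ncard_range_of_injective h.strictMono_level.injective,
    Nat.card_eq_fintype_card, Fintype.card_fin]

theorem level_eq_of_signature_eq {d₁ : ℕ} {f₁ : List Bool → List Bool} (h : IsRegEmb d f)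
    (h₁ : IsRegEmb d₁ f₁) (hσ : signature d f = signature d₁ f₁) :
    d = d₁ ∧ ∀ j < d, level f j = level f₁ j := by
  obtain rfl : d = d₁ := by rw [← h.ncard_signature, ← h₁.ncard_signature, hσ]
  rw [h.signature_eq_range, h₁.signature_eq_range,
    h.strictMono_level.range_inj h₁.strictMono_level] at hσ
  exact ⟨rfl, fun j hj => congrFun hσ ⟨j, hj⟩⟩

theorem cons (h : IsRegEmb d f) (b : Bool) : IsRegEmb d fun x => b :: f x := by
  refine ⟨fun x y hx hy hxy => by simpa using h.1 x y hx hy hxy, fun x hx => ?_⟩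
  obtain ⟨c, h₀, h₁⟩ := h.2 x hx
  exact ⟨c, by simpa [List.cons_prefix_cons] using h₀, by simpa [List.cons_prefix_cons] using h₁⟩

end IsRegEmb

theorem signature_cons (d : ℕ) (f : List Bool → List Bool) (b : Bool) :
    signature d (fun x => b :: f x) = (· + 1) '' signature d f := by
  ext l
  simp only [signature, Set.mem_image, List.length_cons]
  constructor
  · rintro ⟨x, hx, rfl⟩
    exact ⟨_, ⟨x, hx, rfl⟩, rfl⟩
  · rintro ⟨_, ⟨x, hx, rfl⟩, rfl⟩
    exact ⟨x, hx, rfl⟩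

def glue (f₀ f₁ : List Bool → List Bool) : List Bool → List Bool
  | [] => []
  | b :: t => b :: (bif b then f₁ else f₀) t

section Glue

variable {d : ℕ} {f₀ f₁ : List Bool → List Bool}

theorem IsRegEmb.cond (h₀ : IsRegEmb d f₀) (h₁ : IsRegEmb d f₁) (b : Bool) :
    IsRegEmb d (bif b then f₁ else f₀) := by
  cases b <;> assumption

theorem length_glue_cons (h₀ : IsRegEmb d f₀) (h₁ : IsRegEmb d f₁)
    (hlevel : ∀ j < d, level f₀ j = level f₁ j) (b : Bool) {t : List Bool} (ht : t.length < d) :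
    (glue f₀ f₁ (b :: t)).length = level f₀ t.length + 1 := by
  cases b
  · simp [glue, h₀.length_eq_level ht]
  · simp [glue, h₁.length_eq_level ht, hlevel _ ht]

theorem IsRegEmb.glue (h₀ : IsRegEmb d f₀) (h₁ : IsRegEmb d f₁)
    (hlevel : ∀ j < d, level f₀ j = level f₁ j) : IsRegEmb (d + 1) (glue f₀ f₁) := by
  refine ⟨?_, ?_⟩
  · rintro (_ | ⟨b, t⟩) (_ | ⟨b', t'⟩) hx hy hxy
    · rfl
    all_goals simp only [List.length_cons, List.length_nil] at hx hy hxy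
    any_goals omega
    rw [length_glue_cons h₀ h₁ hlevel b (by omega), length_glue_cons h₀ h₁ hlevel b' (by omega),
      Nat.succ_injective hxy]
  · rintro (_ | ⟨b, t⟩) hx
    · exact ⟨false, by simp [_root_.glue], by simp [_root_.glue]⟩
    · obtain ⟨c, hc₀, hc₁⟩ := (h₀.cond h₁ b).2 t (by simpa using hx)
      exact ⟨c, by simpa [_root_.glue, List.cons_prefix_cons] using hc₀,
        by simpa [_root_.glue, List.cons_prefix_cons] using hc₁⟩

theorem signature_glue (h₀ : IsRegEmb d f₀) (h₁ : IsRegEmb d f₁)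
    (hlevel : ∀ j < d, level f₀ j = level f₁ j) :
    signature (d + 1) (glue f₀ f₁) = insert 0 ((· + 1) '' signature d f₀) := by
  ext l
  simp only [signature, Set.mem_insert_iff, Set.mem_image]
  constructor
  · rintro ⟨_ | ⟨b, t⟩, hx, rfl⟩
    · exact Or.inl rfl
    · have ht : t.length < d := by simpa using hx
      rw [length_glue_cons h₀ h₁ hlevel b ht]
      exact Or.inr ⟨_, ⟨List.replicate t.length false, by simpa using ht, rfl⟩, rfl⟩
  · rintro (rfl | ⟨_, ⟨x, hx, rfl⟩, rfl⟩)
    · exact ⟨[], by simp, rfl⟩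
    · exact ⟨false :: x, by simpa using hx, by simp [glue]⟩

end Glue

def branch (b : Bool) (H : Set (List Bool)) : Set (List Bool) := {t | b :: t ∈ H}

section Signatures

variable {H : Set (List Bool)} {σ : Set ℕ}

theorem empty_mem_sigs (H : Set (List Bool)) : ∅ ∈ sigs H :=
  ⟨0, id, ⟨fun _ _ hx => absurd hx (Nat.not_lt_zero _), fun _ hx => absurd hx (by omega)⟩,
    fun _ hx => absurd hx (Nat.not_lt_zero _), by simp⟩

theorem sigs_finite {n : ℕ} (hH : H ⊆ treeVerts n) : (sigs H).Finite := by
  refine (Set.finite_Iio n).finite_subsets.subset ?_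
  rintro _ ⟨d, f, -, hmem, rfl⟩ _ ⟨x, hx, rfl⟩
  exact hH (hmem x hx)

theorem image_succ_mem_sigs {b : Bool} (hσ : σ ∈ sigs (branch b H)) :
    (· + 1) '' σ ∈ sigs H := by
  obtain ⟨d, f, hf, hmem, rfl⟩ := mem_sigs.1 hσ
  exact mem_sigs.2 ⟨d, _, hf.cons b, hmem, (signature_cons d f b).symm⟩

theorem insert_zero_image_succ_mem_sigs (hroot : [] ∈ H) (h₀ : σ ∈ sigs (branch false H))
    (h₁ : σ ∈ sigs (branch true H)) : insert 0 ((· + 1) '' σ) ∈ sigs H := by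
  obtain ⟨d, f₀, hf₀, hmem₀, rfl⟩ := mem_sigs.1 h₀
  obtain ⟨d₁, f₁, hf₁, hmem₁, hσ⟩ := mem_sigs.1 h₁
  obtain ⟨rfl, hlevel⟩ := hf₀.level_eq_of_signature_eq hf₁ hσ
  refine mem_sigs.2 ⟨d + 1, glue f₀ f₁, hf₀.glue hf₁ hlevel, ?_,
    (signature_glue hf₀ hf₁ hlevel).symm⟩
  rintro (_ | ⟨b, t⟩) hx
  · exact hroot
  · cases b
    · exact hmem₀ t (by simpa using hx)
    · exact hmem₁ t (by simpa using hx)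

theorem image_succ_injective : Function.Injective fun σ : Set ℕ => (· + 1) '' σ :=
  Set.image_injective.2 (add_left_injective 1)

theorem insert_zero_image_succ_injective :
    Function.Injective fun σ : Set ℕ => insert 0 ((· + 1) '' σ) := by
  intro σ τ h
  ext m
  simpa using congrArg (m + 1 ∈ ·) h

theorem sigs_branch_finite (hfin : (sigs H).Finite) (b : Bool) : (sigs (branch b H)).Finite :=
  Set.Finite.of_finite_image
    (hfin.subset (Set.image_subset_iff.2 fun _ hσ => image_succ_mem_sigs hσ))
    image_succ_injective.injOn

theorem ncard_sigs_branch_le (hfin : (sigs H).Finite) (b : Bool) :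
    (sigs (branch b H)).ncard ≤ (sigs H).ncard :=
  Set.ncard_le_ncard_of_injOn _ (fun _ hσ => image_succ_mem_sigs hσ)
    image_succ_injective.injOn hfin

theorem ncard_sigs_branch_add_le (hfin : (sigs H).Finite) (hroot : [] ∈ H) :
    (sigs (branch false H)).ncard + (sigs (branch true H)).ncard ≤ (sigs H).ncard := by
  set S₀ := sigs (branch false H)
  set S₁ := sigs (branch true H)
  have hfin₀ := sigs_branch_finite hfin false
  have hfin₁ := sigs_branch_finite hfin true
  set A := (fun σ : Set ℕ => (· + 1) '' σ) '' (S₀ ∪ S₁)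
  set B := (fun σ : Set ℕ => insert 0 ((· + 1) '' σ)) '' (S₀ ∩ S₁)
  have hA : A ⊆ sigs H := by
    rintro _ ⟨σ, hσ | hσ, rfl⟩ <;> exact image_succ_mem_sigs hσ
  have hB : B ⊆ sigs H := by
    rintro _ ⟨σ, ⟨hσ₀, hσ₁⟩, rfl⟩
    exact insert_zero_image_succ_mem_sigs hroot hσ₀ hσ₁
  have hAB : Disjoint A B := by
    rw [Set.disjoint_left]
    rintro _ ⟨σ, -, rfl⟩ ⟨τ, -, hτ⟩
    have : 0 ∈ (· + 1) '' σ := by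
      rw [← show insert 0 ((· + 1) '' τ) = (· + 1) '' σ from hτ]
      exact Set.mem_insert 0 _
    simp at this
  calc S₀.ncard + S₁.ncard = (S₀ ∪ S₁).ncard + (S₀ ∩ S₁).ncard :=
        (Set.ncard_union_add_ncard_inter S₀ S₁ hfin₀ hfin₁).symm
    _ = A.ncard + B.ncard := by
        rw [Set.ncard_image_of_injective _ image_succ_injective,
          Set.ncard_image_of_injective _ insert_zero_image_succ_injective]
    _ = (A ∪ B).ncard :=
        (Set.ncard_union_eq hAB ((hfin₀.union hfin₁).image _) ((hfin₀.inter_of_left _).image _)).symm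
    _ ≤ (sigs H).ncard := Set.ncard_le_ncard (Set.union_subset hA hB) hfin

end Signatures

section Weight

theorem weight_empty : weight ∅ = 0 := by
  simp [weight]

theorem weight_singleton_nil : weight {[]} = 1 := by
  simp [weight]

theorem weight_union {A B : Set (List Bool)} (hA : A.Finite) (hB : B.Finite)
    (hAB : Disjoint A B) : weight (A ∪ B) = weight A + weight B := by
  set φ : List Bool → ℝ := fun x => 2 ^ (-(x.length : ℤ))
  exact Summable.tsum_union_disjoint hAB (hA.summable φ) (hB.summable φ)

theorem weight_image_cons (b : Bool) (H : Set (List Bool)) :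
    weight (List.cons b '' H) = weight H / 2 := by
  rw [weight, tsum_image (fun x : List Bool => (2 : ℝ) ^ (-(x.length : ℤ)))
    (List.cons_injective.injOn), weight, div_eq_mul_inv, ← tsum_mul_right]
  congr! 1 with x
  simp [zpow_add₀, zpow_neg, mul_comm]

theorem eq_inter_nil_union_image_cons_branch (H : Set (List Bool)) :
    H = (H ∩ {[]}) ∪ (List.cons false '' branch false H ∪ List.cons true '' branch true H) := by
  ext (_ | ⟨b, t⟩)
  · simp
  · cases b <;> simp [branch]

theorem weight_eq_branch {H : Set (List Bool)} (hH : H.Finite) :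
    weight H = weight (H ∩ {[]}) + (weight (branch false H) + weight (branch true H)) / 2 := by
  have hbranch (b : Bool) : (List.cons b '' branch b H).Finite :=
    (hH.preimage List.cons_injective.injOn).image _
  have hdisj : Disjoint (List.cons false '' branch false H) (List.cons true '' branch true H) := by
    simp [Set.disjoint_left]
  have hnil : Disjoint (H ∩ {[]})
      (List.cons false '' branch false H ∪ List.cons true '' branch true H) := by
    rw [Set.disjoint_left]
    rintro _ ⟨-, rfl⟩
    simp
  conv_lhs => rw [eq_inter_nil_union_image_cons_branch H]
  rw [weight_union (hH.inter_of_left _) ((hbranch false).union (hbranch true)) hnil,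
    weight_union (hbranch false) (hbranch true) hdisj, weight_image_cons, weight_image_cons,
    add_div]

end Weight

theorem two_rpow_one_add_half_le (x y : ℝ) : (2 : ℝ) ^ (1 + (x + y) / 2) ≤ 2 ^ x + 2 ^ y := by
  have hsq (t : ℝ) : (2 : ℝ) ^ t = 2 ^ (t / 2) * 2 ^ (t / 2) := by
    rw [← Real.rpow_add two_pos, add_halves]
  rw [Real.rpow_add two_pos, Real.rpow_one, add_div, Real.rpow_add two_pos, hsq x, hsq y]
  nlinarith [sq_nonneg ((2 : ℝ) ^ (x / 2) - 2 ^ (y / 2))]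

theorem two_rpow_weight_le_ncard_sigs {n : ℕ} {H : Set (List Bool)} (hH : H ⊆ treeVerts n) :
    (2 : ℝ) ^ weight H ≤ (sigs H).ncard := by
  induction n generalizing H with
  | zero =>
    obtain rfl : H = ∅ := Set.subset_empty_iff.1 fun x hx => Nat.not_lt_zero _ (hH hx)
    rw [weight_empty, Real.rpow_zero, Nat.one_le_cast, Nat.one_le_iff_ne_zero]
    exact Set.ncard_ne_zero_of_mem (empty_mem_sigs ∅) (sigs_finite hH)
  | succ n ih =>
    have hfin := sigs_finite hH
    have ih' (b : Bool) := @ih (branch b H) fun t ht => Nat.succ_lt_succ_iff.1 (hH ht)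
    rw [weight_eq_branch ((List.finite_length_lt Bool (n + 1)).subset hH)]
    set w₀ := weight (branch false H)
    set w₁ := weight (branch true H)
    by_cases hroot : [] ∈ H
    · rw [Set.inter_singleton_of_mem hroot, weight_singleton_nil]
      calc (2 : ℝ) ^ (1 + (w₀ + w₁) / 2) ≤ 2 ^ w₀ + 2 ^ w₁ := two_rpow_one_add_half_le w₀ w₁
        _ ≤ (sigs (branch false H)).ncard + (sigs (branch true H)).ncard :=
            add_le_add (ih' false) (ih' true)
        _ ≤ (sigs H).ncard := by exact_mod_cast ncard_sigs_branch_add_le hfin hroot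
    · rw [Set.inter_singleton_eq_empty.2 hroot, weight_empty, zero_add]
      calc (2 : ℝ) ^ ((w₀ + w₁) / 2) ≤ 2 ^ max w₀ w₁ :=
            Real.rpow_le_rpow_of_exponent_le one_le_two
              (by linarith [le_max_left w₀ w₁, le_max_right w₀ w₁])
        _ = max (2 ^ w₀) (2 ^ w₁) := (Real.monotone_rpow_of_base_ge_one one_le_two).map_max
        _ ≤ (sigs H).ncard := max_le
            ((ih' false).trans (by exact_mod_cast ncard_sigs_branch_le hfin false))
            ((ih' true).trans (by exact_mod_cast ncard_sigs_branch_le hfin true))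

theorem ncard_sigs_le_sum_choose {n d : ℕ} {H : Set (List Bool)} (hH : H ⊆ treeVerts n)
    (hno : ¬∃ f, IsRegEmb d f ∧ ∀ x : List Bool, x.length < d → f x ∈ H) :
    (sigs H).ncard ≤ ∑ i ∈ Finset.range d, n.choose i := by
  classical
  set P := (Finset.range d).biUnion fun i => Finset.powersetCard i (Finset.range n)
  have hsigs : sigs H ⊆ (fun s : Finset ℕ => (s : Set ℕ)) '' P := by
    rintro _ ⟨d', f, hf, hmem, rfl⟩
    have hd' : d' < d := by
      by_contra! hle
      exact hno ⟨f, hf.mono hle, fun x hx => hmem x (hx.trans_le hle)⟩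
    have hfin : (signature d' f).Finite := by
      rw [hf.signature_eq_range]
      exact Set.finite_range _
    refine ⟨hfin.toFinset, Finset.mem_biUnion.2 ⟨d', Finset.mem_range.2 hd', ?_⟩, hfin.coe_toFinset⟩
    rw [Finset.mem_powersetCard, ← Set.ncard_eq_toFinset_card _ hfin, hf.ncard_signature]
    refine ⟨fun l hl => ?_, rfl⟩
    obtain ⟨x, hx, rfl⟩ := hfin.mem_toFinset.1 hl
    exact Finset.mem_range.2 (hH (hmem x hx))
  calc (sigs H).ncard ≤ ((fun s : Finset ℕ => (s : Set ℕ)) '' P).ncard :=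
        Set.ncard_le_ncard hsigs (P.finite_toSet.image _)
    _ ≤ P.card := (Set.ncard_image_le P.finite_toSet).trans (Set.ncard_coe_finset P).le
    _ ≤ ∑ i ∈ Finset.range d, (Finset.powersetCard i (Finset.range n)).card :=
        Finset.card_biUnion_le
    _ = ∑ i ∈ Finset.range d, n.choose i := by simp

theorem eventually_sum_choose_lt_two_rpow (d : ℕ) {δ : ℝ} (hδ : 0 < δ) :
    ∀ᶠ n : ℕ in Filter.atTop, ∑ i ∈ Finset.range d, (n.choose i : ℝ) < 2 ^ (δ * n) := by
  have hr : 1 < (2 : ℝ) ^ δ := Real.one_lt_rpow one_lt_two hδ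
  have hlim : Filter.Tendsto (fun n : ℕ => ∑ i ∈ Finset.range d, (n : ℝ) ^ i / (2 ^ δ) ^ n)
      Filter.atTop (nhds 0) := by
    simpa using tendsto_finsetSum _ fun i _ => tendsto_pow_const_div_const_pow_of_one_lt i hr
  filter_upwards [hlim.eventually (gt_mem_nhds one_pos)] with n hn
  rw [← Finset.sum_div, div_lt_one (by positivity)] at hn
  calc ∑ i ∈ Finset.range d, (n.choose i : ℝ) ≤ ∑ i ∈ Finset.range d, (n : ℝ) ^ i :=
        Finset.sum_le_sum fun i _ => by exact_mod_cast Nat.choose_le_pow n i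
    _ < (2 ^ δ) ^ n := hn
    _ = 2 ^ (δ * n) := by rw [← Real.rpow_natCast, ← Real.rpow_mul zero_le_two]

theorem stmt16_general (d : ℕ) (δ : ℝ) (hδ0 : 0 < δ) :
    ∃ n₀ : ℕ, ∀ n : ℕ, n₀ ≤ n →
      (∑ i ∈ Finset.range d, (n.choose i : ℝ) < (2 : ℝ) ^ (δ * n)) ∧
      ∀ H : Set (List Bool), H ⊆ treeVerts n → δ * n ≤ weight H →
        ∃ f : List Bool → List Bool, IsRegEmb d f ∧
          ∀ x : List Bool, x.length < d → f x ∈ H := by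
  obtain ⟨n₀, hn₀⟩ := Filter.eventually_atTop.1 (eventually_sum_choose_lt_two_rpow d hδ0)
  refine ⟨n₀, fun n hn => ⟨hn₀ n hn, fun H hH hw => ?_⟩⟩
  by_contra hno
  have hupper : ((sigs H).ncard : ℝ) ≤ ∑ i ∈ Finset.range d, (n.choose i : ℝ) := by
    exact_mod_cast ncard_sigs_le_sum_choose hH hno
  have hlower : (2 : ℝ) ^ (δ * n) ≤ (sigs H).ncard :=
    (Real.rpow_le_rpow_of_exponent_le one_le_two hw).trans (two_rpow_weight_le_ncard_sigs hH)
  linarith [hn₀ n hn]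

/-- Density theorem (non-arithmetic version): for every `d ≥ 1` and
`δ ∈ (0,1]`, for all sufficiently large `n`, `2^(δn) > Σ_{i=0}^{d-1} C(n,i)`
and every `H ⊆ V(T_n)` with `w(H) ≥ δn` contains a replica of `T_d`. -/
theorem stmt16 (d : ℕ) (hd : 1 ≤ d) (δ : ℝ) (hδ0 : 0 < δ) (hδ1 : δ ≤ 1) :
    ∃ n₀ : ℕ, ∀ n : ℕ, n₀ ≤ n →
      (∑ i ∈ Finset.range d, (n.choose i : ℝ) < (2 : ℝ) ^ (δ * n)) ∧
      ∀ H : Set (List Bool), H ⊆ treeVerts n → δ * n ≤ weight H →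
        ∃ f : List Bool → List Bool, IsRegEmb d f ∧
          ∀ x : List Bool, x.length < d → f x ∈ H :=
  stmt16_general d δ hδ0
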